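/- Let i ≤ ℓ−1 be a critical index and let θ_i be the unique vertex with Ψ_{>i−1} = Ψ_{>i} ⊎ {θ_i}. For all V-selectors f and g: if f_{i+1}(v) = g_{i+1}(v) for every node v ∈ Θ_{i+1}, {s ∈ 𝐓(v_i) : f(θ_i) = s} = {s ∈ 𝐓(v_i) : g(θ_i) = s}, and {t ∈ 𝐓(v_i) : f(t) = θ_i} = {t ∈ 𝐓(v_i) : g(t) = θ_i}, then f_i(v) = g_i(v) for every node v ∈ Θ_i. (This is the determination content of the claim that f_i is definable from f_{i+1} together with a predicate recording which vertices s ∈ 𝐓(v_i) satisfy f(θ_i) = s and which satisfy f(s) = θ_i.) -/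

import Mathlib

universe u v

/-- A leaf of a graph: a node with at most one neighbour. -/
def IsTreeLeaf {𝒱 : Type v} (T : SimpleGraph 𝒱) (x : 𝒱) : Prop :=
  (T.neighborSet x).Subsingleton

/-- `(T, B)` is a tree decomposition of the graph with vertex set `V` and edge
relation `E`. -/
def IsTreeDecomp {V : Type u} {𝒱 : Type v} (E : V → V → Prop) (T : SimpleGraph 𝒱)
    (B : 𝒱 → Finset V) : Prop :=
  T.IsTree ∧ (∀ s t : V, E s t → ∃ x : 𝒱, s ∈ B x ∧ t ∈ B x) ∧
    ∀ s : V, (T.induce {x : 𝒱 | s ∈ B x}).Connected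

/-- A nice (rooted) tree decomposition: every leaf has a singleton bag, every vertex
is the bag of some leaf, and along every tree edge one bag is obtained from the other
by adding exactly one vertex. -/
def IsNiceTD {V : Type u} {𝒱 : Type v} [DecidableEq V] (E : V → V → Prop)
    (T : SimpleGraph 𝒱) (B : 𝒱 → Finset V) (root : 𝒱) : Prop :=
  IsTreeDecomp E T B ∧
  (∀ x : 𝒱, IsTreeLeaf T x → ∃ s : V, B x = {s}) ∧
  (∀ s : V, ∃ x : 𝒱, IsTreeLeaf T x ∧ B x = {s}) ∧
  ∀ x y : 𝒱, T.Adj x y →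
    (∃ s : V, s ∉ B x ∧ B y = insert s (B x)) ∨ (∃ s : V, s ∉ B y ∧ B x = insert s (B y))

/-- A depth-first traversal `vs 1, …, vs ℓ` of the rooted tree `T`: it starts and ends
at the root, consecutive nodes are adjacent, and every oriented edge of `T` occurs
exactly once among consecutive pairs. -/
structure IsDFT {𝒱 : Type v} (T : SimpleGraph 𝒱) (root : 𝒱) (ℓ : ℕ) (vs : ℕ → 𝒱) :
    Prop where
  one_le : 1 ≤ ℓ
  first : vs 1 = root
  last : vs ℓ = root
  adj : ∀ j : ℕ, 1 ≤ j → j < ℓ → T.Adj (vs j) (vs (j + 1))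
  once : ∀ a b : 𝒱, T.Adj a b → ∃! j : ℕ, 1 ≤ j ∧ j < ℓ ∧ vs j = a ∧ vs (j + 1) = b

/-- `x` is an ancestor of `y` (w.r.t. `root`): `x` lies on the path from the root
to `y`.  (In a tree the path between two nodes is unique.) -/
def Anc {𝒱 : Type v} (T : SimpleGraph 𝒱) (root x y : 𝒱) : Prop :=
  ∀ p : T.Walk root y, p.IsPath → x ∈ p.support

/-- `Θ_i`: the set of ancestors of `vs i`. -/
def Theta {𝒱 : Type v} (T : SimpleGraph 𝒱) (root : 𝒱) (vs : ℕ → 𝒱) (i : ℕ) : Set 𝒱 :=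
  {x | Anc T root x (vs i)}

/-- `Θ_{≤ i} = ⋃_{1 ≤ j ≤ i} Θ_j`. -/
def ThetaLe {𝒱 : Type v} (T : SimpleGraph 𝒱) (root : 𝒱) (vs : ℕ → 𝒱) (i : ℕ) : Set 𝒱 :=
  {x | ∃ j : ℕ, 1 ≤ j ∧ j ≤ i ∧ x ∈ Theta T root vs j}

/-- `Ψ_i = ⋃_{x ∈ Θ_i} B x`. -/
def Psi {V : Type u} {𝒱 : Type v} (T : SimpleGraph 𝒱) (root : 𝒱) (vs : ℕ → 𝒱)
    (B : 𝒱 → Finset V) (i : ℕ) : Set V :=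
  {s | ∃ x ∈ Theta T root vs i, s ∈ B x}

/-- `Ψ_{≤ i} = ⋃_{1 ≤ j ≤ i} Ψ_j`. -/
def PsiLe {V : Type u} {𝒱 : Type v} (T : SimpleGraph 𝒱) (root : 𝒱) (vs : ℕ → 𝒱)
    (B : 𝒱 → Finset V) (i : ℕ) : Set V :=
  {s | ∃ j : ℕ, 1 ≤ j ∧ j ≤ i ∧ s ∈ Psi T root vs B j}

/-- `x = n_i(w)`: `x` is the lowest ancestor of `w` belonging to `Θ_{≤ i}`. -/
def LowestAnc {𝒱 : Type v} (T : SimpleGraph 𝒱) (root : 𝒱) (vs : ℕ → 𝒱) (i : ℕ)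
    (w x : 𝒱) : Prop :=
  Anc T root x w ∧ x ∈ ThetaLe T root vs i ∧
    ∀ y : 𝒱, Anc T root y w → y ∈ ThetaLe T root vs i → Anc T root y x

/-- `r = r(s)`: the node of `𝒯^s = {x | s ∈ B x}` closest to the root. -/
def IsBagRoot {V : Type u} {𝒱 : Type v} (T : SimpleGraph 𝒱) (root : 𝒱)
    (B : 𝒱 → Finset V) (s : V) (r : 𝒱) : Prop :=
  s ∈ B r ∧ ∀ x : 𝒱, s ∈ B x → Anc T root r x

/-- `Ψ_{> i-1}(x) = {s ∈ Ψ_{> i-1} | n_i(s) = x}`, where `n_i(s) = n_i(r(s))`. -/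
def PsiGtAt {V : Type u} {𝒱 : Type v} (T : SimpleGraph 𝒱) (root : 𝒱) (vs : ℕ → 𝒱)
    (B : 𝒱 → Finset V) (i : ℕ) (x : 𝒱) : Set V :=
  {s | s ∉ PsiLe T root vs B (i - 1) ∧
    ∃ r : 𝒱, IsBagRoot T root B s r ∧ LowestAnc T root vs i r x}

/-- Possible values of a selector view: `?`, `⊤`, `⊥`, or an exit pair `(t, m)`. -/
inductive View (V : Type u) : Type u where
  | unk : View V
  | top : View V
  | bot : View V
  | exit : V → ℕ → View V

/-- The trace of the (partial) selector `f` from `s`: `iter f s n` is the `n`-th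
vertex of the trace, if the trace is still defined at step `n`. -/
def iter {V : Type u} (f : V → Option V) (s : V) : ℕ → Option V
  | 0 => some s
  | n + 1 => (iter f s n).bind f

/-- `t` occurs infinitely often on the trace of `f` from `s`. -/
def infOcc {V : Type u} (f : V → Option V) (s t : V) : Prop :=
  ∀ N : ℕ, ∃ n : ℕ, N ≤ n ∧ iter f s n = some t

/-- A parity game together with a tree decomposition and a depth-first traversal:
edge relation `E`, number of colors `C`, coloring `c`, set `V0` of vertices of
player `P₀` (`V1 = V0ᶜ`), tree `T` with bags `B`, depth-first traversal
`vs 1, …, vs len` and distinguished initial vertex `sigma`. -/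
structure Setting (V : Type u) (𝒱 : Type v) where
  E : V → V → Prop
  C : ℕ
  c : V → ℕ
  V0 : Set V
  T : SimpleGraph 𝒱
  vs : ℕ → 𝒱
  len : ℕ
  sigma : V
  B : 𝒱 → Finset V

namespace Setting

variable {V : Type u} {𝒱 : Type v} (S : Setting V 𝒱)

/-- The root of the tree is the first node of the depth-first traversal. -/
def root : 𝒱 := S.vs 1

/-- Standing assumptions: colors lie in `{1, …, C}`, `(T, B)` is a nice tree
decomposition of `(V, E)` rooted at `v₁` with bag `{σ}`, and `vs` is a
depth-first traversal of `T` of length `len`. -/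
def Standing [DecidableEq V] : Prop :=
  (∀ s : V, 1 ≤ S.c s ∧ S.c s ≤ S.C) ∧
  IsNiceTD S.E S.T S.B S.root ∧
  IsDFT S.T S.root S.len S.vs ∧
  S.B S.root = {S.sigma}

def theta (i : ℕ) : Set 𝒱 := Theta S.T S.root S.vs i

def psi (i : ℕ) : Set V := Psi S.T S.root S.vs S.B i

def psiLe (i : ℕ) : Set V := PsiLe S.T S.root S.vs S.B i

def psiGtAt (i : ℕ) (x : 𝒱) : Set V := PsiGtAt S.T S.root S.vs S.B i x

/-- The index `i` is critical: `Ψ_{>i} ⊊ Ψ_{>i-1}`. -/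
def Crit (i : ℕ) : Prop := (S.psiLe i)ᶜ ⊂ (S.psiLe (i - 1))ᶜ

/-- `f` is a `W`-selector: a partial map with domain contained in `W` that follows
edges of the game. -/
def Sel (W : Set V) (f : V → Option V) : Prop :=
  ∀ s t : V, f s = some t → s ∈ W ∧ S.E s t

/-- The (maximal) trace of the `V`-selector `f` from `s` is winning for player `P₀`:
either it is finite and its last vertex belongs to `V1 = V0ᶜ`, or it is infinite and
the maximal color occurring infinitely often along it is even. -/
def TraceWin (f : V → Option V) (s : V) : Prop :=
  (∃ (n : ℕ) (t : V), iter f s n = some t ∧ f t = none ∧ t ∉ S.V0) ∨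
  ((∀ n : ℕ, iter f s n ≠ none) ∧
    ∃ m : ℕ, Even m ∧ (∃ t : V, infOcc f s t ∧ S.c t = m) ∧
      ∀ t : V, infOcc f s t → S.c t ≤ m)

/-- The selector view `f_i(x, s)` of the `V`-selector `f`: `S.SelView f i x s w`
means `f_i(x, s) = w`. -/
def SelView (f : V → Option V) (i : ℕ) (x : 𝒱) (s : V) : View V → Prop := fun w =>
  match w with
  | View.unk =>
      (f s = none ∧ s ∉ S.psiGtAt i x) ∨ (∃ t : V, f s = some t ∧ t ∉ S.psiGtAt i x)
  | View.top =>
      (f s ≠ none ∨ s ∈ S.psiGtAt i x) ∧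
      (∀ (n : ℕ) (t : V), 1 ≤ n → iter f s n = some t → t ∈ S.psiGtAt i x) ∧
      S.TraceWin f s
  | View.bot =>
      (f s ≠ none ∨ s ∈ S.psiGtAt i x) ∧
      (∀ (n : ℕ) (t : V), 1 ≤ n → iter f s n = some t → t ∈ S.psiGtAt i x) ∧
      ¬ S.TraceWin f s
  | View.exit t m =>
      ∃ j : ℕ, 2 ≤ j ∧ iter f s j = some t ∧ t ∉ S.psiGtAt i x ∧
        (∀ (n : ℕ) (u : V), 1 ≤ n → n < j → iter f s n = some u → u ∈ S.psiGtAt i x) ∧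
        (∃ (n : ℕ) (u : V), n < j ∧ iter f s n = some u ∧ S.c u = m) ∧
        (∀ (n : ℕ) (u : V), n < j → iter f s n = some u → S.c u ≤ m)

/-- The selector views `f_i(x)` and `g_i(x)` coincide (as functions on the bag of `x`). -/
def ViewEq (f g : V → Option V) (i : ℕ) (x : 𝒱) : Prop :=
  ∀ s ∈ S.B x, ∀ w : View V, S.SelView f i x s w ↔ S.SelView g i x s w

/-- `f` is a `V`-selector extending the `V₀`-selector `g` (i.e. `g` is the
restriction of `f` to `V0`). -/
def Ext (f g : V → Option V) : Prop :=
  S.Sel Set.univ f ∧ (∀ s ∈ S.V0, g s = f s) ∧ ∀ s ∉ S.V0, g s = none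

/-- The selector view `f_i(x)` of a `V`-selector, as a relation on the bag of `x`. -/
def viewOn (f : V → Option V) (i : ℕ) (x : 𝒱) : V → View V → Prop :=
  fun s w => s ∈ S.B x ∧ S.SelView f i x s w

/-- `ω_i^g(x) = { f_i(x) | f is an extension of g }`. -/
def omega (g : V → Option V) (i : ℕ) (x : 𝒱) : Set (V → View V → Prop) :=
  {R | ∃ f : V → Option V, S.Ext f g ∧ R = S.viewOn f i x}

/-- The accessibility set `α_i^g`: vertices of `Ψ_i` reachable from `σ` along the
trace of some extension of `g`. -/
def alpha (g : V → Option V) (i : ℕ) : Set V :=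
  {s | s ∈ S.psi i ∧ ∃ f : V → Option V, S.Ext f g ∧ ∃ k : ℕ, iter f S.sigma k = some s}

/-- The set `B(g)_{x,y} ⊆ {⊥, ⊤}` (with `false` for `⊥` and `true` for `⊤`). -/
def Bsel (g : V → Option V) (x y : V) : Set Bool :=
  {b | (b = false ∧ (¬ S.E x y ∨ (x ∈ S.V0 ∧ g x = none) ∨
          (∃ z : V, g x = some z ∧ z ≠ y) ∨ (S.E x y ∧ x ∉ S.V0))) ∨
       (b = true ∧ (g x = some y ∨ (S.E x y ∧ x ∉ S.V0)))}

end Setting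

/-!
At a critical index `i` the region `Ψ_{>i-1}(v_i)` consists of the new vertex `θ`, whose topmost
bag is at `v_i`, and of `R = Ψ_{>i-1}(v_i) ∖ Ψ_{≤i}`; the regions at the other nodes of `Θ_i` do
not change from index `i` to `i + 1`, so there the views are given. If the traversal moves up
from `v_i`, it never returns below `v_i`, so `v_i` has no descendants and `R` is empty. Otherwise
`v_{i+1}` is a child of `v_i` and `R` is the union of the index-`(i+1)` regions at `v_i` and at
`v_{i+1}`. As the bags containing a vertex form a subtree, edges leave either of them only
towards `Ψ_{≤i}`, and edges from the bag of `v_i` enter the second one only from the bag of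
`v_{i+1}`; hence the views relative to `R` agree on the bag of `v_i`. Finally, a trace relative
to `insert θ R` is its trace relative to `R` cut at the visits of `θ`, and these are governed by
which vertices of the bag of `v_i` are `f θ` and which are mapped to `θ`.
-/

section Trace

variable {V : Type u} {f : V → Option V} {s t v : V} {j k m n : ℕ}

theorem iter_eq_iterate (f : V → Option V) (s : V) (n : ℕ) :
    iter f s n = (fun o => o.bind f)^[n] (some s) := by
  induction n with
  | zero => rfl
  | succ n ih => rw [Function.iterate_succ_apply', ← ih]; rfl

theorem iter_one (f : V → Option V) (s : V) : iter f s 1 = f s := rfl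

theorem iter_add_of_eq_some (h : iter f s k = some v) (n : ℕ) :
    iter f s (n + k) = iter f v n := by
  rw [iter_eq_iterate, Function.iterate_add_apply, ← iter_eq_iterate, h, iter_eq_iterate]

theorem iter_eq_none_of_le (hmn : m ≤ n) (h : iter f s m = none) : iter f s n = none := by
  obtain ⟨k, rfl⟩ := Nat.exists_eq_add_of_le' hmn
  rw [iter_eq_iterate, Function.iterate_add_apply, ← iter_eq_iterate, h]
  exact Function.iterate_fixed rfl k

theorem exists_iter_eq_some_of_le (hmn : m ≤ n) (h : iter f s n = some t) :
    ∃ u, iter f s m = some u :=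
  Option.ne_none_iff_exists'.1 fun hm => by simp [iter_eq_none_of_le hmn hm] at h

theorem iter_mod_of_eq_some (h : iter f s j = some s) (n : ℕ) :
    iter f s (n % j) = iter f s n := by
  have hper : Function.IsPeriodicPt (fun o => o.bind f) j (some s) := by
    rw [Function.IsPeriodicPt, Function.IsFixedPt, ← iter_eq_iterate, h]
  simpa only [iter_eq_iterate] using hper.iterate_mod_apply n

theorem infOcc_iff_of_iter_eq_some (h : iter f s k = some v) :
    infOcc f s t ↔ infOcc f v t := by
  refine ⟨fun hs N => ?_, fun hv N => ?_⟩
  · obtain ⟨n, hn, hnt⟩ := hs (N + k)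
    refine ⟨n - k, by omega, ?_⟩
    rwa [← iter_add_of_eq_some h, Nat.sub_add_cancel (by omega)]
  · obtain ⟨n, hn, hnt⟩ := hv N
    exact ⟨n + k, by omega, by rwa [iter_add_of_eq_some h]⟩

end Trace

open Classical in
noncomputable def View.stay {V : Type u} (P : Prop) : View V := if P then .top else .bot

theorem View.stay_ne_unk {V : Type u} (P : Prop) : (View.stay P : View V) ≠ .unk := by
  unfold View.stay
  split_ifs <;> simp

def View.after {V : Type u} (m : ℕ) : View V → View V
  | .exit t m' => .exit t (max m m')
  | w => w

namespace Setting

variable {V : Type u} {𝒱 : Type v} (S : Setting V 𝒱) {f g : V → Option V}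
  {R K Q Q₁ Q₂ : Set V} {s t u θ : V} {j k m : ℕ} {w : View V}

def StaysIn (R : Set V) (f : V → Option V) (s : V) : Prop :=
  ∀ (n : ℕ) (t : V), 1 ≤ n → iter f s n = some t → t ∈ R

def StaysInBefore (R : Set V) (f : V → Option V) (s : V) (j : ℕ) : Prop :=
  ∀ (n : ℕ) (u : V), 1 ≤ n → n < j → iter f s n = some u → u ∈ R

def IsMaxColor (f : V → Option V) (s : V) (j m : ℕ) : Prop :=
  (∃ (n : ℕ) (u : V), n < j ∧ iter f s n = some u ∧ S.c u = m) ∧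
    ∀ (n : ℕ) (u : V), n < j → iter f s n = some u → S.c u ≤ m

/-- The selector view relative to an arbitrary region `R`; `f_i(x, s)` is the case
`R = Ψ_{>i-1}(x)`. -/
def ViewIn (R : Set V) (f : V → Option V) (s : V) : View V → Prop
  | .unk => (f s = none ∧ s ∉ R) ∨ ∃ t : V, f s = some t ∧ t ∉ R
  | .top => (f s ≠ none ∨ s ∈ R) ∧ StaysIn R f s ∧ S.TraceWin f s
  | .bot => (f s ≠ none ∨ s ∈ R) ∧ StaysIn R f s ∧ ¬ S.TraceWin f s
  | .exit t m => ∃ j : ℕ, 2 ≤ j ∧ iter f s j = some t ∧ t ∉ R ∧ StaysInBefore R f s j ∧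
      S.IsMaxColor f s j m

theorem selView_eq_viewIn (f : V → Option V) (i : ℕ) (x : 𝒱) (s : V) :
    S.SelView f i x s = S.ViewIn (S.psiGtAt i x) f s := by
  funext w
  cases w <;> rfl

theorem traceWin_iff_of_iter_eq_some (h : iter f s k = some u) :
    S.TraceWin f s ↔ S.TraceWin f u := by
  have hdef : ∀ n, iter f s n ≠ none ↔ iter f u (n - k) ≠ none := fun n => by
    rcases le_or_gt k n with hkn | hnk
    · rw [← iter_add_of_eq_some h, Nat.sub_add_cancel hkn]
    · obtain ⟨w, hw⟩ := exists_iter_eq_some_of_le hnk.le h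
      simp [hw, Nat.sub_eq_zero_of_le hnk.le, iter]
  have hend : ∀ n w, iter f s n = some w → f w = none → k ≤ n := fun n w hw hfw => by
    by_contra! hnk
    have : iter f s (n + 1) = none := by simp [iter, hw, hfw]
    simp [iter_eq_none_of_le hnk this] at h
  simp only [TraceWin, infOcc_iff_of_iter_eq_some h]
  refine or_congr ⟨fun ⟨n, w, hw, hfw, hV⟩ => ⟨n - k, w, ?_, hfw, hV⟩,
    fun ⟨n, w, hw, hfw, hV⟩ => ⟨n + k, w, by rwa [iter_add_of_eq_some h], hfw, hV⟩⟩
    (and_congr_left' ⟨fun hs n => ?_, fun hu n => (hdef n).2 (hu _)⟩)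
  · rwa [← iter_add_of_eq_some h, Nat.sub_add_cancel (hend n w hw hfw)]
  · simpa [iter_add_of_eq_some h] using (hdef (n + k)).1 (hs _)

theorem traceWin_iff_of_eq_none (h : f s = none) : S.TraceWin f s ↔ s ∉ S.V0 := by
  have hnone : ∀ n, 1 ≤ n → iter f s n = none := fun n hn => iter_eq_none_of_le hn h
  constructor
  · rintro (⟨n, w, hw, -, hV⟩ | ⟨hs, -⟩)
    · rcases n with _ | n
      · cases hw; exact hV
      · simp [hnone (n + 1) (by omega)] at hw
    · exact absurd (hnone 1 le_rfl) (hs 1)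
  · exact fun hV => Or.inl ⟨0, s, rfl, h, hV⟩

theorem traceWin_iff_of_loop (h : iter f s j = some s) (hj : 1 ≤ j) (hm : S.IsMaxColor f s j m) :
    S.TraceWin f s ↔ Even m := by
  have hocc : ∀ w, infOcc f s w ↔ ∃ n < j, iter f s n = some w := fun w => by
    refine ⟨fun hw => ?_, fun ⟨n, hn, hw⟩ N => ⟨n + N * j, by nlinarith, ?_⟩⟩
    · obtain ⟨n, -, hn⟩ := hw 0
      exact ⟨n % j, Nat.mod_lt n hj, by rw [iter_mod_of_eq_some h, hn]⟩
    · rwa [← iter_mod_of_eq_some h, Nat.add_mul_mod_self_right, iter_mod_of_eq_some h]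
  have hdef : ∀ n, iter f s n ≠ none := fun n => by
    obtain ⟨w, hw⟩ := exists_iter_eq_some_of_le (Nat.mod_lt n hj).le h
    rw [← iter_mod_of_eq_some h, hw]
    exact Option.some_ne_none w
  obtain ⟨⟨n₀, w₀, hn₀, hw₀, hc₀⟩, hmax⟩ := hm
  constructor
  · rintro (⟨n, w, hw, hfw, -⟩ | ⟨-, m', hm', ⟨w, hw, rfl⟩, hmax'⟩)
    · exact absurd (by simp [iter, hw, hfw]) (hdef (n + 1))
    · obtain ⟨n, hn, hnw⟩ := (hocc w).1 hw
      have := hmax' w₀ ((hocc w₀).2 ⟨n₀, hn₀, hw₀⟩)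
      have := hmax n w hn hnw
      rwa [show m = S.c w by omega]
  · exact fun hm => Or.inr ⟨hdef, m, hm, ⟨w₀, (hocc w₀).2 ⟨n₀, hn₀, hw₀⟩, hc₀⟩,
      fun w hw => let ⟨n, hn, hnw⟩ := (hocc w).1 hw; hmax n w hn hnw⟩

variable {S}

theorem StaysIn.before (h : StaysIn R f s) (j : ℕ) : StaysInBefore R f s j :=
  fun n u hn _ hu => h n u hn hu

theorem StaysInBefore.append (h : StaysInBefore R f s j) (hθ : iter f s j = some θ)
    (hθR : θ ∈ R) (h' : StaysInBefore R f θ k) : StaysInBefore R f s (k + j) := by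
  intro n u hn hnkj hu
  rcases lt_trichotomy n j with hnj | rfl | hjn
  · exact h n u hn hnj hu
  · rw [hθ] at hu; cases hu; exact hθR
  · refine h' (n - j) u (by omega) (by omega) ?_
    rwa [← iter_add_of_eq_some hθ, Nat.sub_add_cancel hjn.le]

variable (S) in
theorem isMaxColor_one : S.IsMaxColor f s 1 (S.c s) :=
  ⟨⟨0, s, Nat.one_pos, rfl, rfl⟩, fun n u hn hu => by
    obtain rfl : n = 0 := by omega
    cases hu; rfl⟩

theorem IsMaxColor.append {m' : ℕ} (h : S.IsMaxColor f s j m) (hθ : iter f s j = some θ)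
    (h' : S.IsMaxColor f θ k m') : S.IsMaxColor f s (k + j) (max m m') := by
  obtain ⟨⟨n, u, hn, hu, rfl⟩, hmax⟩ := h
  obtain ⟨⟨n', u', hn', hu', rfl⟩, hmax'⟩ := h'
  refine ⟨?_, fun n'' u'' hn'' hu'' => ?_⟩
  · rcases le_total (S.c u') (S.c u) with hle | hle
    · exact ⟨n, u, by omega, hu, (max_eq_left hle).symm⟩
    · exact ⟨n' + j, u', by omega, by rwa [iter_add_of_eq_some hθ], (max_eq_right hle).symm⟩
  · rcases lt_or_ge n'' j with hlt | hge
    · exact le_max_of_le_left (hmax n'' u'' hlt hu'')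
    · refine le_max_of_le_right (hmax' (n'' - j) u'' (by omega) ?_)
      rwa [← iter_add_of_eq_some hθ, Nat.sub_add_cancel hge]

theorem ViewIn.firstStep (h : S.ViewIn R f s w) (hw : w ≠ .unk) :
    (f s ≠ none ∨ s ∈ R) ∧ ∀ t, f s = some t → t ∈ R := by
  match w, h with
  | .unk, _ => exact absurd rfl hw
  | .top, ⟨h₀, hR, _⟩ | .bot, ⟨h₀, hR, _⟩ => exact ⟨h₀, fun t ht => hR 1 t le_rfl ht⟩
  | .exit _ _, ⟨j, hj, hjt, _, hR, _⟩ =>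
    obtain ⟨u, hu⟩ := exists_iter_eq_some_of_le (by omega : 1 ≤ j) hjt
    exact ⟨Or.inl (by rw [← iter_one f s, hu]; simp), fun t ht => hR 1 t le_rfl (by omega) ht⟩

theorem ViewIn.not_unk (h : S.ViewIn R f s w) (hw : w ≠ .unk) : ¬ S.ViewIn R f s .unk := by
  obtain ⟨h₀, h₁⟩ := h.firstStep hw
  rintro (⟨hf, hs⟩ | ⟨t, ht, htR⟩)
  · exact hs (h₀.resolve_left (not_not.2 hf))
  · exact htR (h₁ t ht)

theorem not_viewIn_exit_of_staysIn (hR : StaysIn R f s) : ¬ S.ViewIn R f s (.exit t m) :=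
  fun ⟨j, hj, hjt, htR, _⟩ => htR (hR j t (by omega) hjt)

theorem ViewIn.exit_unique {t' : V} {m' : ℕ} (h : S.ViewIn R f s (.exit t m))
    (h' : S.ViewIn R f s (.exit t' m')) : t = t' ∧ m = m' := by
  obtain ⟨j, hj, hjt, htR, hR, ⟨n, w, hn, hnw, rfl⟩, hmax⟩ := h
  obtain ⟨j', hj', hjt', htR', hR', ⟨n', w', hn', hnw', rfl⟩, hmax'⟩ := h'
  obtain rfl : j = j' := by
    by_contra hne
    rcases Nat.lt_or_gt_of_ne hne with hlt | hlt
    · exact htR (hR' j t (by omega) hlt hjt)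
    · exact htR' (hR j' t' (by omega) hlt hjt')
  rw [hjt] at hjt'
  cases hjt'
  exact ⟨rfl, le_antisymm (hmax' n w hn hnw) (hmax n' w' hn' hnw')⟩

theorem ViewIn.unique {w' : View V} (h : S.ViewIn R f s w) (h' : S.ViewIn R f s w') :
    w = w' := by
  by_cases hw : w = .unk
  · subst hw
    by_contra hne
    exact h'.not_unk (Ne.symm hne) h
  by_cases hw' : w' = .unk
  · subst hw'
    exact absurd h' (h.not_unk hw)
  cases w <;> cases w'
  all_goals first
    | rfl
    | exact absurd rfl hw
    | exact absurd rfl hw'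
    | exact absurd h.2.2 h'.2.2
    | exact absurd h'.2.2 h.2.2
    | exact absurd h' (S.not_viewIn_exit_of_staysIn h.2.1)
    | exact absurd h (S.not_viewIn_exit_of_staysIn h'.2.1)
    | obtain ⟨rfl, rfl⟩ := h.exit_unique h'; rfl

variable (S) in
theorem exists_isMaxColor (h : iter f s j = some t) (hj : 1 ≤ j) : ∃ m, S.IsMaxColor f s j m := by
  obtain ⟨n, hn, hmax⟩ := Finset.exists_max_image (Finset.range j)
    (fun n => S.c ((iter f s n).getD s)) ⟨0, Finset.mem_range.2 hj⟩
  rw [Finset.mem_range] at hn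
  obtain ⟨u, hu⟩ := exists_iter_eq_some_of_le hn.le h
  refine ⟨S.c u, ⟨n, u, hn, hu, rfl⟩, fun n' u' hn' hu' => ?_⟩
  simpa [hu, hu'] using hmax n' (Finset.mem_range.2 hn')

variable (S) in
theorem exists_viewIn (R : Set V) (f : V → Option V) (s : V) : ∃ w, S.ViewIn R f s w := by
  classical
  by_cases hstay : StaysIn R f s
  · by_cases h₀ : f s ≠ none ∨ s ∈ R
    · by_cases hwin : S.TraceWin f s
      · exact ⟨.top, h₀, hstay, hwin⟩
      · exact ⟨.bot, h₀, hstay, hwin⟩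
    · push Not at h₀
      exact ⟨.unk, Or.inl h₀⟩
  have hex : ∃ n, 1 ≤ n ∧ ∃ t, iter f s n = some t ∧ t ∉ R := by
    simp only [StaysIn, not_forall] at hstay
    obtain ⟨n, t, hn, ht, htR⟩ := hstay
    exact ⟨n, hn, t, ht, htR⟩
  obtain ⟨hj, t, hjt, htR⟩ := Nat.find_spec hex
  by_cases h1 : Nat.find hex = 1
  · exact ⟨.unk, Or.inr ⟨t, by rw [← iter_one f s, ← h1, hjt], htR⟩⟩
  obtain ⟨m, hm⟩ := S.exists_isMaxColor hjt hj
  refine ⟨.exit t m, Nat.find hex, by omega, hjt, htR, fun n u hn hnj hu => ?_, hm⟩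
  by_contra huR
  exact Nat.find_min hex hnj ⟨hn, u, hu, huR⟩

theorem viewIn_eq_of_viewIn {R' : Set V} {s' : V} (h : S.ViewIn R f s w)
    (h' : S.ViewIn R' g s' w) : S.ViewIn R f s = S.ViewIn R' g s' :=
  funext fun _ => propext ⟨fun hw => h.unique hw ▸ h', fun hw => h'.unique hw ▸ h⟩

theorem viewIn_unk_iff (hs : s ∉ R) : S.ViewIn R f s .unk ↔ ∀ t, f s = some t → t ∉ R := by
  refine ⟨?_, fun h => ?_⟩
  · rintro (⟨hf, -⟩ | ⟨t', ht', ht'R⟩) t ht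
    · simp [hf] at ht
    · rw [ht] at ht'
      cases ht'
      exact ht'R
  · cases hfs : f s with
    | none => exact Or.inl ⟨hfs, hs⟩
    | some t => exact Or.inr ⟨t, hfs, h t hfs⟩

theorem ViewIn.mono (h : S.ViewIn Q f s w) (hQR : Q ⊆ R) (hw : w ≠ .unk)
    (hexit : ∀ t m, w = .exit t m → t ∉ R) : S.ViewIn R f s w := by
  match w, h with
  | .unk, _ => exact absurd rfl hw
  | .top, ⟨h₀, hQ, hwin⟩ | .bot, ⟨h₀, hQ, hwin⟩ =>
    exact ⟨h₀.imp_right (hQR ·), fun n t hn ht => hQR (hQ n t hn ht), hwin⟩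
  | .exit t m, ⟨j, hj, hjt, _, hQ, hm⟩ =>
    exact ⟨j, hj, hjt, hexit t m rfl, fun n u h₁ h₂ h₃ => hQR (hQ n u h₁ h₂ h₃), hm⟩

theorem ViewIn.exists_pred_of_exit (h : S.ViewIn Q f s (.exit t m)) :
    ∃ u ∈ Q, f u = some t := by
  obtain ⟨j, hj, hjt, -, hQ, -⟩ := h
  obtain ⟨u, hu⟩ := exists_iter_eq_some_of_le (Nat.sub_le j 1) hjt
  refine ⟨u, hQ (j - 1) u (by omega) (by omega) hu, ?_⟩
  rw [show j = j - 1 + 1 by omega] at hjt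
  simpa [iter, hu] using hjt

theorem viewIn_eq_of_enter (hQR : Q ⊆ R) (hcl : ∀ u ∈ Q, ∀ t ∈ R, f u = some t → t ∈ Q)
    (hs : s ∉ R) (ht : f s = some t) (htQ : t ∈ Q) : S.ViewIn R f s = S.ViewIn Q f s := by
  obtain ⟨w, hw⟩ := S.exists_viewIn Q f s
  have hunk : w ≠ .unk := by
    rintro rfl
    exact (S.viewIn_unk_iff (fun h => hs (hQR h))).1 hw t ht htQ
  refine S.viewIn_eq_of_viewIn (hw.mono hQR hunk ?_) hw
  rintro t' m rfl ht'R
  obtain ⟨u, huQ, hu⟩ := hw.exists_pred_of_exit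
  obtain ⟨-, -, -, ht'Q, -⟩ := hw
  exact ht'Q (hcl u huQ t' ht'R hu)

theorem viewIn_stay (h₀ : f s ≠ none ∨ s ∈ R) (hR : StaysIn R f s) {P : Prop}
    (hP : S.TraceWin f s ↔ P) : S.ViewIn R f s (View.stay P) := by
  unfold View.stay
  split_ifs with h
  · exact ⟨h₀, hR, hP.2 h⟩
  · exact ⟨h₀, hR, fun hw => h (hP.1 hw)⟩

theorem viewIn_of_eq_none (hs : s ∈ R) (h : f s = none) :
    S.ViewIn R f s (View.stay (s ∉ S.V0)) :=
  S.viewIn_stay (Or.inr hs) (fun n t hn ht => by simp [iter_eq_none_of_le hn h] at ht)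
    (S.traceWin_iff_of_eq_none h)

def Reaches (R : Set V) (f : V → Option V) (s θ : V) (m : ℕ) : Prop :=
  ∃ j, 1 ≤ j ∧ iter f s j = some θ ∧ StaysInBefore R f s j ∧ S.IsMaxColor f s j m

theorem reaches_of_eq_some (h : f s = some θ) : S.Reaches R f s θ (S.c s) :=
  ⟨1, le_rfl, h, fun n _ hn hn1 => absurd hn1 (by omega), S.isMaxColor_one⟩

theorem ViewIn.reaches (h : S.ViewIn R f s (.exit θ m)) : S.Reaches R f s θ m :=
  let ⟨j, hj, hjθ, _, hR, hm⟩ := h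
  ⟨j, by omega, hjθ, hR, hm⟩

theorem Reaches.mono (h : S.Reaches Q f s θ m) (hQR : Q ⊆ R) : S.Reaches R f s θ m :=
  let ⟨j, hj, hjθ, hQ, hm⟩ := h
  ⟨j, hj, hjθ, fun n u h₁ h₂ h₃ => hQR (hQ n u h₁ h₂ h₃), hm⟩

theorem Reaches.viewIn_of_loop (h : S.Reaches R f θ θ m) (hθ : θ ∈ R) :
    S.ViewIn R f θ (View.stay (Even m)) := by
  obtain ⟨j, hj, hjθ, hR, hm⟩ := h
  refine S.viewIn_stay (Or.inr hθ) (fun n u _ hu => ?_) (S.traceWin_iff_of_loop hjθ hj hm)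
  rw [← iter_mod_of_eq_some hjθ] at hu
  rcases Nat.eq_zero_or_pos (n % j) with h0 | hpos
  · rw [h0] at hu
    cases hu
    exact hθ
  · exact hR _ u hpos (Nat.mod_lt n hj) hu

theorem Reaches.viewIn_after (h : S.Reaches R f s θ m) (hθ : θ ∈ R) (hw : S.ViewIn R f θ w)
    (hwu : w ≠ .unk) : S.ViewIn R f s (w.after m) := by
  obtain ⟨j, hj, hjθ, hR, hm⟩ := h
  have h₀ : f s ≠ none := by
    obtain ⟨u, hu⟩ := exists_iter_eq_some_of_le hj hjθ
    rw [← iter_one f s, hu]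
    exact Option.some_ne_none u
  match w, hw with
  | .unk, _ => exact absurd rfl hwu
  | .top, ⟨_, hθR, hwin⟩ =>
    exact ⟨Or.inl h₀, fun n u hn hu => hR.append hjθ hθ (hθR.before n) n u hn (by omega) hu,
      (S.traceWin_iff_of_iter_eq_some hjθ).2 hwin⟩
  | .bot, ⟨_, hθR, hwin⟩ =>
    exact ⟨Or.inl h₀, fun n u hn hu => hR.append hjθ hθ (hθR.before n) n u hn (by omega) hu,
      fun h => hwin ((S.traceWin_iff_of_iter_eq_some hjθ).1 h)⟩
  | .exit t m', ⟨k, hk, hkt, htR, hθR, hm'⟩ =>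
    exact ⟨k + j, by omega, by rwa [iter_add_of_eq_some hjθ], htR, hR.append hjθ hθ hθR,
      hm.append hjθ hm'⟩

theorem Reaches.viewIn_exit (h : S.Reaches R f s θ m) (hθ : θ ∈ R) (hu : f θ = some u)
    (huR : u ∉ R) : S.ViewIn R f s (.exit u (max m (S.c θ))) := by
  obtain ⟨j, hj, hjθ, hR, hm⟩ := h
  refine ⟨1 + j, by omega, by rw [iter_add_of_eq_some hjθ]; exact hu, huR,
    hR.append hjθ hθ fun n _ hn hn1 => absurd hn1 (by omega), hm.append hjθ S.isMaxColor_one⟩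


theorem ViewIn.insert_of_ne (h : S.ViewIn R f s w) (hw : w ≠ .unk) (hθ : ∀ m, w ≠ .exit θ m) :
    S.ViewIn (insert θ R) f s w := by
  refine h.mono (Set.subset_insert θ R) hw fun t m hwt => ?_
  subst hwt
  obtain ⟨-, -, -, htR, -⟩ := h
  rintro (rfl | ht)
  · exact hθ m rfl
  · exact htR ht

theorem viewIn_eq_of_enter_of_enter (hQR : Q ⊆ R)
    (hfQ : ∀ u ∈ Q, ∀ t ∈ R, f u = some t → t ∈ Q) (hgQ : ∀ u ∈ Q, ∀ t ∈ R, g u = some t → t ∈ Q)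
    (hs : s ∉ R) (ht : f s = some t) (htQ : t ∈ Q) (hview : S.ViewIn Q f s = S.ViewIn Q g s) :
    S.ViewIn R f s = S.ViewIn R g s := by
  have hsQ : s ∉ Q := fun h => hs (hQR h)
  obtain ⟨t', ht', ht'Q⟩ : ∃ t', g s = some t' ∧ t' ∈ Q := by
    by_contra! hg
    have hunk := (S.viewIn_unk_iff hsQ).2 hg
    rw [← hview, viewIn_unk_iff hsQ] at hunk
    exact hunk t ht htQ
  rw [viewIn_eq_of_enter hQR hfQ hs ht htQ, hview, viewIn_eq_of_enter hQR hgQ hs ht' ht'Q]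

theorem viewIn_union_eq (hs : s ∉ Q₁ ∪ Q₂)
    (hf₁ : ∀ u ∈ Q₁, ∀ t ∈ Q₁ ∪ Q₂, f u = some t → t ∈ Q₁)
    (hg₁ : ∀ u ∈ Q₁, ∀ t ∈ Q₁ ∪ Q₂, g u = some t → t ∈ Q₁)
    (hf₂ : ∀ u ∈ Q₂, ∀ t ∈ Q₁ ∪ Q₂, f u = some t → t ∈ Q₂)
    (hg₂ : ∀ u ∈ Q₂, ∀ t ∈ Q₁ ∪ Q₂, g u = some t → t ∈ Q₂)
    (h₁ : ∀ t ∈ Q₁, f s = some t ∨ g s = some t → S.ViewIn Q₁ f s = S.ViewIn Q₁ g s)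
    (h₂ : ∀ t ∈ Q₂, f s = some t ∨ g s = some t → S.ViewIn Q₂ f s = S.ViewIn Q₂ g s) :
    S.ViewIn (Q₁ ∪ Q₂) f s = S.ViewIn (Q₁ ∪ Q₂) g s := by
  by_cases hf : ∃ t, f s = some t ∧ t ∈ Q₁ ∪ Q₂
  · obtain ⟨t, ht, ht₁ | ht₂⟩ := hf
    · exact viewIn_eq_of_enter_of_enter Set.subset_union_left hf₁ hg₁ hs ht ht₁
        (h₁ t ht₁ (Or.inl ht))
    · exact viewIn_eq_of_enter_of_enter Set.subset_union_right hf₂ hg₂ hs ht ht₂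
        (h₂ t ht₂ (Or.inl ht))
  by_cases hg : ∃ t, g s = some t ∧ t ∈ Q₁ ∪ Q₂
  · obtain ⟨t, ht, ht₁ | ht₂⟩ := hg
    · exact (viewIn_eq_of_enter_of_enter Set.subset_union_left hg₁ hf₁ hs ht ht₁
        (h₁ t ht₁ (Or.inr ht)).symm).symm
    · exact (viewIn_eq_of_enter_of_enter Set.subset_union_right hg₂ hf₂ hs ht ht₂
        (h₂ t ht₂ (Or.inr ht)).symm).symm
  push Not at hf hg
  exact viewIn_eq_of_viewIn ((viewIn_unk_iff hs).2 hf) ((viewIn_unk_iff hs).2 hg)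

section InsertVertex

variable (hθR : θ ∉ R) (hθK : θ ∈ K)
  (hfθ : ∀ t, f θ = some t → t ∈ K ∨ t ∈ R) (hgθ : ∀ t, g θ = some t → t ∈ K ∨ t ∈ R)
  (hout : ∀ t ∈ K, f θ = some t ↔ g θ = some t)
  (hview : ∀ s ∈ K, S.ViewIn R f s = S.ViewIn R g s)
include hθR hθK hfθ hgθ hout hview

theorem exists_viewIn_insert_self :
    ∃ w, S.ViewIn (insert θ R) f θ w ∧ S.ViewIn (insert θ R) g θ w ∧
      (w = .unk → ∃ u, f θ = some u ∧ g θ = some u ∧ u ∉ insert θ R) := by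
  have hθ : θ ∈ insert θ R := Set.mem_insert θ R
  obtain ⟨w₀, hf₀⟩ := S.exists_viewIn R f θ
  have hg₀ : S.ViewIn R g θ w₀ := hview θ hθK ▸ hf₀
  by_cases hu : w₀ = .unk
  · subst hu
    rw [viewIn_unk_iff hθR] at hf₀ hg₀
    cases hfθ' : f θ with
    | none =>
      have hgθ' : g θ = none := by
        cases hgθ' : g θ with
        | none => rfl
        | some t =>
          rcases hgθ t hgθ' with htK | htR
          · simp [(hout t htK).2 hgθ'] at hfθ'
          · exact absurd htR (hg₀ t hgθ')
      exact ⟨_, S.viewIn_of_eq_none hθ hfθ', S.viewIn_of_eq_none hθ hgθ',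
        fun h => absurd h (View.stay_ne_unk _)⟩
    | some t =>
      have htK : t ∈ K := (hfθ t hfθ').resolve_right (hf₀ t hfθ')
      have hgθ' := (hout t htK).1 hfθ'
      by_cases htθ : t = θ
      · subst htθ
        exact ⟨_, (S.reaches_of_eq_some hfθ').viewIn_of_loop hθ,
          (S.reaches_of_eq_some hgθ').viewIn_of_loop hθ, fun h => absurd h (View.stay_ne_unk _)⟩
      · have ht : t ∉ insert θ R := by simp [htθ, hf₀ t hfθ']
        exact ⟨.unk, Or.inr ⟨t, hfθ', ht⟩, Or.inr ⟨t, hgθ', ht⟩, fun _ => ⟨t, rfl, hgθ', ht⟩⟩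
  by_cases hloop : ∃ m, w₀ = .exit θ m
  · obtain ⟨m, rfl⟩ := hloop
    exact ⟨_, (hf₀.reaches.mono (Set.subset_insert θ R)).viewIn_of_loop hθ,
      (hg₀.reaches.mono (Set.subset_insert θ R)).viewIn_of_loop hθ,
      fun h => absurd h (View.stay_ne_unk _)⟩
  push Not at hloop
  exact ⟨w₀, hf₀.insert_of_ne hu hloop, hg₀.insert_of_ne hu hloop, fun h => absurd h hu⟩

theorem viewIn_insert_eq (hKR : ∀ s ∈ K, s ∉ R)
    (hin : ∀ s ∈ K, f s = some θ ↔ g s = some θ) :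
    ∀ s ∈ K, S.ViewIn (insert θ R) f s = S.ViewIn (insert θ R) g s := by
  have hθ : θ ∈ insert θ R := Set.mem_insert θ R
  obtain ⟨wθ, hfθw, hgθw, hunk⟩ :=
    exists_viewIn_insert_self hθR hθK hfθ hgθ hout hview
  have hreach : ∀ {s : V} {m : ℕ}, S.Reaches (insert θ R) f s θ m →
      S.Reaches (insert θ R) g s θ m →
      S.ViewIn (insert θ R) f s = S.ViewIn (insert θ R) g s := fun hf hg => by
    by_cases hw : wθ = .unk
    · obtain ⟨u, hfu, hgu, hu⟩ := hunk hw
      exact viewIn_eq_of_viewIn (hf.viewIn_exit hθ hfu hu) (hg.viewIn_exit hθ hgu hu)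
    · exact viewIn_eq_of_viewIn (hf.viewIn_after hθ hfθw hw) (hg.viewIn_after hθ hgθw hw)
  intro s hs
  by_cases hsθ : s = θ
  · subst hsθ
    exact viewIn_eq_of_viewIn hfθw hgθw
  obtain ⟨w₀, hf₀⟩ := S.exists_viewIn R f s
  have hg₀ : S.ViewIn R g s w₀ := hview s hs ▸ hf₀
  by_cases hu : w₀ = .unk
  · subst hu
    by_cases hfs : f s = some θ
    · exact hreach (S.reaches_of_eq_some hfs) (S.reaches_of_eq_some ((hin s hs).1 hfs))
    have hgs : g s ≠ some θ := fun h => hfs ((hin s hs).2 h)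
    have hs' : s ∉ insert θ R := by simp [hsθ, hKR s hs]
    rw [viewIn_unk_iff (hKR s hs)] at hf₀ hg₀
    refine viewIn_eq_of_viewIn ((viewIn_unk_iff hs').2 fun t ht => ?_)
      ((viewIn_unk_iff hs').2 fun t ht => ?_)
    · rintro (rfl | htR)
      exacts [hfs ht, hf₀ t ht htR]
    · rintro (rfl | htR)
      exacts [hgs ht, hg₀ t ht htR]
  by_cases hloop : ∃ m, w₀ = .exit θ m
  · obtain ⟨m, rfl⟩ := hloop
    exact hreach (hf₀.reaches.mono (Set.subset_insert θ R))
      (hg₀.reaches.mono (Set.subset_insert θ R))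
  push Not at hloop
  exact viewIn_eq_of_viewIn (hf₀.insert_of_ne hu hloop) (hg₀.insert_of_ne hu hloop)

end InsertVertex

end Setting

section RootedTree

variable {𝒱 : Type v} {T : SimpleGraph 𝒱} {root a b c p u x y z : 𝒱}

theorem SimpleGraph.Walk.IsPath.length_eq_dist_of_isTree (hT : T.IsTree) {p : T.Walk x y}
    (hp : p.IsPath) : p.length = T.dist x y := by
  obtain ⟨q, hq⟩ := hT.connected.exists_walk_length_eq_dist x y
  rw [(hT.existsUnique_path x y).unique hp (q.isPath_of_length_eq_dist hq), hq]

theorem induce_connected_induction {W : Set 𝒱} (hW : (T.induce W).Connected) {P : 𝒱 → Prop}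
    (hstep : ∀ a ∈ W, ∀ c ∈ W, T.Adj a c → P a → P c) (hy : y ∈ W) (hPy : P y) (hz : z ∈ W) :
    P z := by
  obtain ⟨w⟩ := hW.preconnected ⟨y, hy⟩ ⟨z, hz⟩
  suffices ∀ {a b : W}, (T.induce W).Walk a b → P a → P b from this w hPy
  intro a b w
  induction w with
  | nil => exact id
  | cons hac _ ih => exact fun hPa => ih (hstep _ (Subtype.prop _) _ (Subtype.prop _) hac hPa)

namespace Anc

theorem refl (T : SimpleGraph 𝒱) (root x : 𝒱) : Anc T root x x := fun p _ => p.end_mem_support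

theorem root_left (x : 𝒱) : Anc T root root x := fun p _ => p.start_mem_support

theorem of_mem_support (hT : T.IsTree) {p : T.Walk root y} (hp : p.IsPath)
    (hx : x ∈ p.support) : Anc T root x y :=
  fun _ hq => (hT.existsUnique_path root y).unique hp hq ▸ hx

theorem trans (hxy : Anc T root x y) (hyz : Anc T root y z) : Anc T root x z := by
  classical
  exact fun q hq => q.support_takeUntil_subset_support (hyz q hq) (hxy _ (hq.takeUntil (hyz q hq)))

theorem dist_lt (hT : T.IsTree) (h : Anc T root x y) (hne : x ≠ y) :
    T.dist root x < T.dist root y := by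
  classical
  obtain ⟨p, hp⟩ := (hT.existsUnique_path root y).exists
  have hx := h p hp
  rw [← hp.length_eq_dist_of_isTree hT, ← (hp.takeUntil hx).length_eq_dist_of_isTree hT]
  exact p.length_takeUntil_lt_length hx hne

theorem eq_of_dist_le (hT : T.IsTree) (h : Anc T root x y)
    (hd : T.dist root y ≤ T.dist root x) : x = y := by
  by_contra hne
  exact absurd (h.dist_lt hT hne) (not_lt.2 hd)

theorem antisymm (hT : T.IsTree) (hxy : Anc T root x y) (hyx : Anc T root y x) : x = y := by
  by_contra hne
  exact lt_asymm (hxy.dist_lt hT hne) (hyx.dist_lt hT (Ne.symm hne))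

theorem getVert (hT : T.IsTree) {p : T.Walk root z} (hp : p.IsPath) {m n : ℕ} (hmn : m ≤ n) :
    Anc T root (p.getVert m) (p.getVert n) := by
  refine of_mem_support hT (hp.take n) ?_
  have := (p.take n).getVert_mem_support m
  rwa [SimpleGraph.Walk.take_getVert, min_eq_right hmn] at this

theorem eq_getVert (hT : T.IsTree) (h : Anc T root x z) {p : T.Walk root z} (hp : p.IsPath) :
    x = p.getVert (T.dist root x) := by
  classical
  have hx := h p hp
  rw [← (hp.takeUntil hx).length_eq_dist_of_isTree hT, p.getVert_length_takeUntil]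

theorem total (hT : T.IsTree) (hxz : Anc T root x z) (hyz : Anc T root y z) :
    Anc T root x y ∨ Anc T root y x := by
  obtain ⟨p, hp⟩ := (hT.existsUnique_path root z).exists
  rw [hxz.eq_getVert hT hp, hyz.eq_getVert hT hp]
  exact (le_total _ _).imp (getVert hT hp) (getVert hT hp)

theorem of_adj (hT : T.IsTree) (h : T.Adj a b) : Anc T root a b ∨ Anc T root b a := by
  have hb {a b : 𝒱} (h : T.Adj a b) (hd : T.dist root b = T.dist root a + 1) :
      Anc T root a b := by
    obtain ⟨q, hq⟩ := hT.connected.exists_walk_length_eq_dist root a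
    refine of_mem_support hT ((q.concat h).isPath_of_length_eq_dist ?_) ?_
    · rw [SimpleGraph.Walk.length_concat, hq, hd]
    · rw [SimpleGraph.Walk.support_concat]
      exact List.mem_append_left _ q.end_mem_support
  rcases hT.dist_eq_dist_add_one_of_adj root h with hd | hd
  · exact Or.inr (hb h.symm hd)
  · exact Or.inl (hb h hd)

theorem dist_eq_add_one (hT : T.IsTree) (h : T.Adj a b) (hab : Anc T root a b) :
    T.dist root b = T.dist root a + 1 := by
  have := hab.dist_lt hT h.ne
  rcases hT.dist_eq_dist_add_one_of_adj root h with hd | hd <;> omega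

theorem eq_or_anc_of_adj (hT : T.IsTree) (h : T.Adj a b) (hab : Anc T root a b)
    (hx : Anc T root x b) : x = b ∨ Anc T root x a := by
  rcases total hT hx hab with hxa | hax
  · exact Or.inr hxa
  have hd := dist_eq_add_one hT h hab
  rcases le_or_gt (T.dist root x) (T.dist root a) with hle | hlt
  · exact Or.inr (hax.eq_of_dist_le hT hle ▸ refl T root x)
  · exact Or.inl (hx.eq_of_dist_le hT (by omega))

theorem eq_of_adj_of_adj (hT : T.IsTree) (ha : T.Adj a c) (hb : T.Adj b c)
    (hac : Anc T root a c) (hbc : Anc T root b c) : a = b := by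
  have hda := dist_eq_add_one hT ha hac
  have hdb := dist_eq_add_one hT hb hbc
  rcases total hT hac hbc with hab | hba
  · exact hab.eq_of_dist_le hT (by omega)
  · exact (hba.eq_of_dist_le hT (by omega)).symm

theorem eq_of_adj_of_not_anc (hT : T.IsTree) (hpa : T.Adj p a) (hp : Anc T root p a)
    (huw : T.Adj u x) (hu : ¬ Anc T root a u) (hx : Anc T root a x) : u = p ∧ x = a := by
  rcases of_adj hT huw with hux | hxu
  · rcases eq_or_anc_of_adj hT huw hux hx with rfl | hau
    · exact ⟨eq_of_adj_of_adj hT huw hpa hux hp, rfl⟩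
    · exact absurd hau hu
  · exact absurd (hx.trans hxu) hu

theorem mem_of_not_anc (hT : T.IsTree) {W : Set 𝒱} (hW : (T.induce W).Connected)
    (hy : y ∈ W) (hz : z ∈ W) (hay : Anc T root a y) (haz : ¬ Anc T root a z) : a ∈ W := by
  refine induce_connected_induction hW (P := fun x => Anc T root a x → a ∈ W)
    (fun b hb c hc hbc hPb hac => ?_) hz (absurd · haz) hy hay
  rcases of_adj hT hbc with h | h
  · rcases eq_or_anc_of_adj hT hbc h hac with rfl | hab
    exacts [hc, hPb hab]
  · exact hPb (hac.trans h)

theorem exists_forall_of_connected (hT : T.IsTree) {W : Set 𝒱} (hW : (T.induce W).Connected) :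
    ∃ r ∈ W, ∀ x ∈ W, Anc T root r x := by
  obtain ⟨⟨x₀, hx₀⟩⟩ := hW.nonempty
  obtain ⟨r, hr, hmin⟩ := (measure (T.dist root)).wf.has_min W ⟨x₀, hx₀⟩
  refine ⟨r, hr, fun x hx => induce_connected_induction hW (fun a _ c hc hac hra => ?_) hr
    (refl T root r) hx⟩
  rcases of_adj hT hac with h | h
  · exact hra.trans h
  rcases total hT hra h with hrc | hcr
  · exact hrc
  rcases eq_or_ne c r with rfl | hne
  exacts [refl T root c, absurd (hcr.dist_lt hT hne) (hmin c hc)]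

end Anc

end RootedTree

theorem Nat.exists_not_and_succ_of_le {P : ℕ → Prop} {a b : ℕ} (hab : a ≤ b) (ha : ¬ P a)
    (hb : P b) : ∃ m, a ≤ m ∧ m < b ∧ ¬ P m ∧ P (m + 1) := by
  induction b, hab using Nat.le_induction with
  | base => exact absurd hb ha
  | succ b hab ih =>
    by_cases hPb : P b
    · obtain ⟨m, h₁, h₂, h₃, h₄⟩ := ih hPb
      exact ⟨m, h₁, by omega, h₃, h₄⟩
    · exact ⟨b, hab, b.lt_succ_self, hPb, hb⟩

section Traversal

variable {𝒱 : Type v} {T : SimpleGraph 𝒱} {root : 𝒱} {vs : ℕ → 𝒱} {ℓ i j k : ℕ}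
  {a w x z : 𝒱}

theorem mem_thetaLe_of_anc (h : Anc T root a x) (hx : x ∈ ThetaLe T root vs i) :
    a ∈ ThetaLe T root vs i :=
  let ⟨k, h₁, h₂, hk⟩ := hx
  ⟨k, h₁, h₂, h.trans hk⟩

theorem vs_mem_thetaLe (h₁ : 1 ≤ j) (h₂ : j ≤ i) : vs j ∈ ThetaLe T root vs i :=
  ⟨j, h₁, h₂, Anc.refl T root _⟩

theorem thetaLe_mono (h : i ≤ j) : ThetaLe T root vs i ⊆ ThetaLe T root vs j :=
  fun _ ⟨k, h₁, h₂, hk⟩ => ⟨k, h₁, h₂.trans h, hk⟩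

theorem mem_thetaLe_succ :
    x ∈ ThetaLe T root vs (i + 1) ↔ x ∈ ThetaLe T root vs i ∨ Anc T root x (vs (i + 1)) := by
  refine ⟨fun ⟨k, h₁, h₂, hk⟩ => ?_, ?_⟩
  · rcases Nat.lt_or_ge k (i + 1) with hki | hki
    · exact Or.inl ⟨k, h₁, by omega, hk⟩
    · obtain rfl : k = i + 1 := by omega
      exact Or.inr hk
  · rintro (hx | hx)
    exacts [thetaLe_mono i.le_succ hx, ⟨i + 1, by omega, le_rfl, hx⟩]

theorem LowestAnc.unique (hT : T.IsTree) {x' : 𝒱} (h : LowestAnc T root vs i w x)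
    (h' : LowestAnc T root vs i w x') : x = x' :=
  (h'.2.2 x h.1 h.2.1).antisymm hT (h.2.2 x' h'.1 h'.2.1)

theorem lowestAnc_self (hw : w ∈ ThetaLe T root vs i) : LowestAnc T root vs i w w :=
  ⟨Anc.refl T root w, hw, fun _ hy _ => hy⟩

theorem LowestAnc.of_le (h : LowestAnc T root vs j w x) (hij : i ≤ j)
    (hx : x ∈ ThetaLe T root vs i) : LowestAnc T root vs i w x :=
  ⟨h.1, hx, fun y hy hyD => h.2.2 y hy (thetaLe_mono hij hyD)⟩

theorem lowestAnc_congr {w' : 𝒱}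
    (h : ∀ z ∈ ThetaLe T root vs i, Anc T root z w ↔ Anc T root z w') :
    LowestAnc T root vs i w x ↔ LowestAnc T root vs i w' x := by
  refine ⟨fun ⟨hxw, hx, hmax⟩ => ⟨(h x hx).1 hxw, hx, fun y hy hyD => hmax y ((h y hyD).2 hy) hyD⟩,
    fun ⟨hxw, hx, hmax⟩ => ⟨(h x hx).2 hxw, hx, fun y hy hyD => hmax y ((h y hyD).1 hy) hyD⟩⟩

namespace IsDFT

theorem eq_or_mem_thetaLe (hT : T.IsTree) (hdft : IsDFT T root ℓ vs) (hj : 1 ≤ j)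
    (hjℓ : j ≤ ℓ) (hx : Anc T root x (vs j)) : x = vs j ∨ x ∈ ThetaLe T root vs (j - 1) := by
  rcases Nat.lt_or_ge j 2 with hj2 | hj2
  · obtain rfl : j = 1 := by omega
    rw [hdft.first] at hx ⊢
    exact Or.inl (hx.antisymm hT (Anc.root_left x))
  have hadj : T.Adj (vs (j - 1)) (vs j) := by
    simpa [Nat.sub_add_cancel hj] using hdft.adj (j - 1) (by omega) (by omega)
  have hprev : vs (j - 1) ∈ ThetaLe T root vs (j - 1) := vs_mem_thetaLe (by omega) le_rfl
  rcases Anc.of_adj hT hadj with hup | hdown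
  · exact (hup.eq_or_anc_of_adj hT hadj hx).imp_right (mem_thetaLe_of_anc · hprev)
  · exact Or.inr (mem_thetaLe_of_anc (hx.trans hdown) hprev)

theorem exists_eq (hT : T.IsTree) (hdft : IsDFT T root ℓ vs) (w : 𝒱) :
    ∃ j, 1 ≤ j ∧ j ≤ ℓ ∧ vs j = w := by
  rcases eq_or_ne root w with rfl | hne
  · exact ⟨1, le_rfl, hdft.one_le, hdft.first⟩
  obtain ⟨p, -⟩ := (hT.existsUnique_path root w).exists
  obtain ⟨j, ⟨hj, hjℓ, -, hjw⟩, -⟩ :=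
    hdft.once _ _ (SimpleGraph.Walk.adj_penultimate (SimpleGraph.Walk.not_nil_of_ne (p := p) hne))
  exact ⟨j + 1, by omega, hjℓ, hjw⟩

theorem not_anc_of_lt (hT : T.IsTree) (hdft : IsDFT T root ℓ vs) (hi : 1 ≤ i) (hiℓ : i < ℓ)
    (hup : Anc T root (vs (i + 1)) (vs i)) (hik : i < k) (hkℓ : k ≤ ℓ) :
    ¬ Anc T root (vs i) (vs k) := by
  intro hk
  have hadj : T.Adj (vs (i + 1)) (vs i) := (hdft.adj i hi hiℓ).symm
  have hparent : ¬ Anc T root (vs i) (vs (i + 1)) := fun h => hadj.ne (hup.antisymm hT h)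
  have hroot : ¬ Anc T root (vs i) (vs 1) := fun h =>
    hparent (h.trans (hdft.first ▸ Anc.root_left _))
  have hentry : ∀ m, 1 ≤ m → m < ℓ → ¬ Anc T root (vs i) (vs m) →
      Anc T root (vs i) (vs (m + 1)) →
      1 ≤ m ∧ m < ℓ ∧ vs m = vs (i + 1) ∧ vs (m + 1) = vs i := fun m hm hmℓ h h' =>
    ⟨hm, hmℓ, Anc.eq_of_adj_of_not_anc hT hadj hup (hdft.adj m hm hmℓ) h h'⟩
  obtain ⟨m, hm, hmk, hm', hm''⟩ := Nat.exists_not_and_succ_of_le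
    (P := fun n => Anc T root (vs i) (vs n)) (show i + 1 ≤ k from hik) hparent hk
  obtain ⟨m₀, hm₀, hm₀i, hm₀', hm₀''⟩ := Nat.exists_not_and_succ_of_le
    (P := fun n => Anc T root (vs i) (vs n)) hi hroot (Anc.refl T root (vs i))
  -- both entries below `vs i` use the oriented edge from `vs (i + 1)`, which occurs only once
  have := (hdft.once _ _ hadj).unique (hentry m (by omega) (by omega) hm' hm'')
    (hentry m₀ hm₀ (by omega) hm₀' hm₀'')
  omega

theorem eq_of_anc (hT : T.IsTree) (hdft : IsDFT T root ℓ vs) (hi : 1 ≤ i) (hiℓ : i < ℓ)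
    (hup : Anc T root (vs (i + 1)) (vs i)) (hfresh : vs i ∉ ThetaLe T root vs (i - 1))
    (hw : Anc T root (vs i) w) : w = vs i := by
  obtain ⟨j, hj, hjℓ, rfl⟩ := hdft.exists_eq hT w
  rcases lt_trichotomy j i with hji | rfl | hij
  · exact absurd ⟨j, hj, by omega, hw⟩ hfresh
  · rfl
  · exact absurd hw (hdft.not_anc_of_lt hT hi hiℓ hup hij hjℓ)

end IsDFT

end Traversal

section TreeDecomp

variable {V : Type u} {𝒱 : Type v} {E : V → V → Prop} {T : SimpleGraph 𝒱} {B : 𝒱 → Finset V}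
  {root r y : 𝒱} {s : V}

theorem IsTreeDecomp.exists_isBagRoot (h : IsTreeDecomp E T B) (root : 𝒱) (s : V) :
    ∃ r, IsBagRoot T root B s r :=
  let ⟨r, hr, hmin⟩ := Anc.exists_forall_of_connected h.1 (h.2.2 s)
  ⟨r, hr, hmin⟩

theorem IsBagRoot.unique (hT : T.IsTree) {r' : 𝒱} (h : IsBagRoot T root B s r)
    (h' : IsBagRoot T root B s r') : r = r' :=
  (h.2 r' h'.1).antisymm hT (h'.2 r h.1)

theorem IsBagRoot.anc_iff (h : IsTreeDecomp E T B) (hr : IsBagRoot T root B s r)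
    (hy : s ∈ B y) {D : Set 𝒱} (hD : ∀ z ∈ D, Anc T root r z → s ∈ B z → Anc T root z r) :
    ∀ z ∈ D, Anc T root z r ↔ Anc T root z y := by
  refine fun z hz => ⟨fun hzr => hzr.trans (hr.2 y hy), fun hzy => ?_⟩
  rcases Anc.total h.1 hzy (hr.2 y hy) with hzr | hrz
  · exact hzr
  by_cases hzr : Anc T root z r
  · exact hzr
  · exact hD z hz hrz (Anc.mem_of_not_anc h.1 (h.2.2 s) hy hr.1 hzy hzr)

end TreeDecomp

namespace Setting

variable {V : Type u} {𝒱 : Type v} {S : Setting V 𝒱} {f g : V → Option V} {i j : ℕ}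
  {θ s t p : V} {x y z : 𝒱}

theorem mem_psiLe_of_mem_thetaLe (hz : z ∈ ThetaLe S.T S.root S.vs j) (hs : s ∈ S.B z) :
    s ∈ S.psiLe j :=
  let ⟨k, h₁, h₂, hk⟩ := hz
  ⟨k, h₁, h₂, z, hk, hs⟩

theorem ViewEq.viewIn_eq (h : S.ViewEq f g i x) (hs : s ∈ S.B x) :
    S.ViewIn (S.psiGtAt i x) f s = S.ViewIn (S.psiGtAt i x) g s := by
  rw [← selView_eq_viewIn, ← selView_eq_viewIn]
  exact funext fun w => propext (h s hs w)

/-- The standing assumptions, with `θ` the vertex added at the critical index `i`. -/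
structure CriticalStep (S : Setting V 𝒱) (i : ℕ) (θ : V) : Prop where
  isTreeDecomp : IsTreeDecomp S.E S.T S.B
  dft : IsDFT S.T S.root S.len S.vs
  one_le : 1 ≤ i
  lt_len : i < S.len
  compl_psiLe_pred : (S.psiLe (i - 1))ᶜ = insert θ (S.psiLe i)ᶜ
  mem_psiLe : θ ∈ S.psiLe i

theorem Standing.criticalStep [DecidableEq V] (hS : S.Standing) (hi1 : 1 ≤ i)
    (hi2 : i ≤ S.len - 1) (hθ1 : (S.psiLe (i - 1))ᶜ = insert θ ((S.psiLe i)ᶜ))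
    (hθ2 : θ ∈ S.psiLe i) : S.CriticalStep i θ :=
  ⟨hS.2.1.1, hS.2.2.1, hi1, by have := hS.2.2.1.one_le; omega, hθ1, hθ2⟩

namespace CriticalStep

variable (hc : S.CriticalStep i θ)
include hc

theorem isTree : S.T.IsTree := hc.isTreeDecomp.1

theorem adj : S.T.Adj (S.vs i) (S.vs (i + 1)) := hc.dft.adj i hc.one_le hc.lt_len

theorem vs_mem_thetaLe : S.vs i ∈ ThetaLe S.T S.root S.vs i :=
  _root_.vs_mem_thetaLe hc.one_le le_rfl

theorem not_mem_psiLe_pred_iff (s : V) : s ∉ S.psiLe (i - 1) ↔ s = θ ∨ s ∉ S.psiLe i := by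
  simpa using Set.ext_iff.1 hc.compl_psiLe_pred s

theorem not_mem_psiLe_pred : θ ∉ S.psiLe (i - 1) := (hc.not_mem_psiLe_pred_iff θ).2 (Or.inl rfl)

theorem mem_bag : θ ∈ S.B (S.vs i) := by
  obtain ⟨k, hk, hki, z, hz, hθz⟩ := hc.mem_psiLe
  have hnot : ∀ z ∈ ThetaLe S.T S.root S.vs (i - 1), θ ∉ S.B z :=
    fun z hz h => hc.not_mem_psiLe_pred (mem_psiLe_of_mem_thetaLe hz h)
  obtain rfl : k = i := by
    by_contra hne
    exact hnot z ⟨k, hk, by omega, hz⟩ hθz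
  rcases hc.dft.eq_or_mem_thetaLe hc.isTree hk hc.lt_len.le hz with rfl | hz'
  exacts [hθz, absurd hθz (hnot z hz')]

theorem vs_not_mem_thetaLe_pred : S.vs i ∉ ThetaLe S.T S.root S.vs (i - 1) :=
  fun h => hc.not_mem_psiLe_pred (mem_psiLe_of_mem_thetaLe h hc.mem_bag)

theorem eq_of_anc (hz : z ∈ ThetaLe S.T S.root S.vs i) (h : Anc S.T S.root (S.vs i) z) :
    z = S.vs i := by
  obtain ⟨k, hk, hki, hzk⟩ := hz
  rcases lt_or_eq_of_le hki with hlt | rfl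
  · exact absurd ⟨k, hk, by omega, h.trans hzk⟩ hc.vs_not_mem_thetaLe_pred
  · exact hzk.antisymm hc.isTree h

theorem isBagRoot : IsBagRoot S.T S.root S.B θ (S.vs i) := by
  obtain ⟨r, hr⟩ := hc.isTreeDecomp.exists_isBagRoot S.root θ
  rcases hc.dft.eq_or_mem_thetaLe hc.isTree hc.one_le hc.lt_len.le (hr.2 _ hc.mem_bag)
    with rfl | hr'
  exacts [hr, absurd (mem_psiLe_of_mem_thetaLe hr' hr.1) hc.not_mem_psiLe_pred]

theorem mem_psiGtAt : θ ∈ S.psiGtAt i (S.vs i) :=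
  ⟨hc.not_mem_psiLe_pred, _, hc.isBagRoot, lowestAnc_self hc.vs_mem_thetaLe⟩

theorem mem_psiLe_of_mem_bag (hs : s ∈ S.B (S.vs i)) : s ∈ S.psiLe i :=
  mem_psiLe_of_mem_thetaLe hc.vs_mem_thetaLe hs

theorem mem_theta_succ (hx : x ∈ S.theta i) (hxi : x ≠ S.vs i) : x ∈ S.theta (i + 1) := by
  rcases Anc.of_adj hc.isTree hc.adj with hdown | hup
  · exact Anc.trans hx hdown
  · exact (Anc.eq_or_anc_of_adj hc.isTree hc.adj.symm hup hx).resolve_left hxi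

theorem psiGtAt_succ (hx : x ∈ S.theta i) (hxi : x ≠ S.vs i) :
    S.psiGtAt (i + 1) x = S.psiGtAt i x := by
  have hxD : x ∈ ThetaLe S.T S.root S.vs i := ⟨i, hc.one_le, le_rfl, hx⟩
  ext s
  refine ⟨fun ⟨hs, r, hr, hlow⟩ =>
    ⟨(hc.not_mem_psiLe_pred_iff s).2 (Or.inr hs), r, hr, hlow.of_le i.le_succ hxD⟩, ?_⟩
  rintro ⟨hs, r, hr, hlow⟩
  have hsθ : s ≠ θ := by
    rintro rfl
    rw [hr.unique hc.isTree hc.isBagRoot] at hlow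
    exact hxi ((lowestAnc_self hc.vs_mem_thetaLe).unique hc.isTree hlow).symm
  refine ⟨((hc.not_mem_psiLe_pred_iff s).1 hs).resolve_left hsθ, r, hr, hlow.1,
    thetaLe_mono i.le_succ hlow.2.1, fun z hzr hz => ?_⟩
  rcases mem_thetaLe_succ.1 hz with hz | hz
  · exact hlow.2.2 z hzr hz
  rcases Anc.of_adj hc.isTree hc.adj with hdown | hup
  · rcases Anc.eq_or_anc_of_adj hc.isTree hc.adj hdown hz with rfl | hzi
    · exact absurd ((hlow.2.2 _ (hdown.trans hzr) hc.vs_mem_thetaLe).antisymm hc.isTree hx)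
        (Ne.symm hxi)
    · exact hlow.2.2 z hzr ⟨i, hc.one_le, le_rfl, hzi⟩
  · exact hlow.2.2 z hzr ⟨i, hc.one_le, le_rfl, hz.trans hup⟩

theorem insert_diff_psiLe :
    insert θ (S.psiGtAt i (S.vs i) \ S.psiLe i) = S.psiGtAt i (S.vs i) := by
  ext s
  refine ⟨?_, fun hs => ?_⟩
  · rintro (rfl | ⟨hs, -⟩)
    exacts [hc.mem_psiGtAt, hs]
  · by_cases hsθ : s = θ
    · exact Or.inl hsθ
    · exact Or.inr ⟨hs, ((hc.not_mem_psiLe_pred_iff s).1 hs.1).resolve_left hsθ⟩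

theorem mem_psiGtAt_of_mem_bag (hs : s ∉ S.psiLe i) (hy : s ∈ S.B y)
    (hiy : Anc S.T S.root (S.vs i) y) : s ∈ S.psiGtAt i (S.vs i) := by
  obtain ⟨r, hr⟩ := hc.isTreeDecomp.exists_isBagRoot S.root s
  refine ⟨(hc.not_mem_psiLe_pred_iff s).2 (Or.inr hs), r, hr,
    (lowestAnc_congr (hr.anc_iff hc.isTreeDecomp hy fun z hz _ hsz =>
      absurd (mem_psiLe_of_mem_thetaLe hz hsz) hs)).2
      ⟨hiy, hc.vs_mem_thetaLe, fun z hzy hz => ?_⟩⟩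
  rcases Anc.total hc.isTree hzy hiy with h | h
  exacts [h, hc.eq_of_anc hz h ▸ Anc.refl _ _ _]

theorem mem_psiGtAt_succ_iff (hs : s ∉ S.psiLe i) (hy : s ∈ S.B y) :
    s ∈ S.psiGtAt (i + 1) x ↔ LowestAnc S.T S.root S.vs (i + 1) y x := by
  obtain ⟨r, hr⟩ := hc.isTreeDecomp.exists_isBagRoot S.root s
  have hD : ∀ z ∈ ThetaLe S.T S.root S.vs (i + 1), Anc S.T S.root r z → s ∈ S.B z →
      Anc S.T S.root z r := fun z hz hrz hsz => by
    rcases mem_thetaLe_succ.1 hz with hz | hz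
    · exact absurd (mem_psiLe_of_mem_thetaLe hz hsz) hs
    rcases hc.dft.eq_or_mem_thetaLe hc.isTree (by omega) hc.lt_len (hrz.trans hz) with h | h
    · exact h ▸ hz
    · exact absurd (mem_psiLe_of_mem_thetaLe h hr.1) hs
  have hcongr := lowestAnc_congr (x := x) (hr.anc_iff hc.isTreeDecomp hy hD)
  refine ⟨fun ⟨_, r', hr', hlow⟩ => hcongr.1 (hr'.unique hc.isTree hr ▸ hlow),
    fun h => ⟨hs, r, hr, hcongr.2 h⟩⟩

theorem mem_psiGtAt_succ_of_edge (hs : s ∈ S.psiGtAt (i + 1) x) (hE : S.E s t)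
    (ht : t ∉ S.psiLe i) : t ∈ S.psiGtAt (i + 1) x := by
  obtain ⟨y, hsy, hty⟩ := hc.isTreeDecomp.2.1 s t hE
  exact (hc.mem_psiGtAt_succ_iff ht hty).2 ((hc.mem_psiGtAt_succ_iff hs.1 hsy).1 hs)

theorem edge_theta (hE : S.E θ t) :
    t ∈ S.B (S.vs i) ∨ t ∈ S.psiGtAt i (S.vs i) \ S.psiLe i := by
  obtain ⟨y, hθy, hty⟩ := hc.isTreeDecomp.2.1 θ t hE
  have hiy := hc.isBagRoot.2 y hθy
  by_cases ht : t ∈ S.psiLe i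
  · obtain ⟨k, hk, hki, z, hz, htz⟩ := ht
    by_cases hiz : Anc S.T S.root (S.vs i) z
    · exact Or.inl (hc.eq_of_anc ⟨k, hk, hki, hz⟩ hiz ▸ htz)
    · exact Or.inl (Anc.mem_of_not_anc hc.isTree (hc.isTreeDecomp.2.2 t) hty htz hiy hiz)
  · exact Or.inr ⟨hc.mem_psiGtAt_of_mem_bag ht hty hiy, ht⟩

theorem diff_psiLe_eq_empty (hup : Anc S.T S.root (S.vs (i + 1)) (S.vs i)) :
    S.psiGtAt i (S.vs i) \ S.psiLe i = ∅ := by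
  refine Set.eq_empty_of_forall_notMem fun s ⟨⟨_, r, hr, hlow⟩, hs⟩ => hs ?_
  obtain rfl := hc.dft.eq_of_anc hc.isTree hc.one_le hc.lt_len hup hc.vs_not_mem_thetaLe_pred
    hlow.1
  exact hc.mem_psiLe_of_mem_bag hr.1

theorem diff_psiLe_eq_union (hdown : Anc S.T S.root (S.vs i) (S.vs (i + 1))) :
    S.psiGtAt i (S.vs i) \ S.psiLe i =
      S.psiGtAt (i + 1) (S.vs i) ∪ S.psiGtAt (i + 1) (S.vs (i + 1)) := by
  have hnext : S.vs (i + 1) ∈ ThetaLe S.T S.root S.vs (i + 1) :=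
    _root_.vs_mem_thetaLe (by omega) le_rfl
  ext s
  constructor
  · rintro ⟨⟨-, r, hr, hlow⟩, hs⟩
    by_cases hr1 : Anc S.T S.root (S.vs (i + 1)) r
    · refine Or.inr ⟨hs, r, hr, hr1, hnext, fun z hzr hz => ?_⟩
      rcases mem_thetaLe_succ.1 hz with hz | hz
      exacts [(hlow.2.2 z hzr hz).trans hdown, hz]
    · refine Or.inl ⟨hs, r, hr, hlow.1, thetaLe_mono i.le_succ hc.vs_mem_thetaLe,
        fun z hzr hz => ?_⟩
      rcases mem_thetaLe_succ.1 hz with hz | hz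
      · exact hlow.2.2 z hzr hz
      rcases Anc.eq_or_anc_of_adj hc.isTree hc.adj hdown hz with rfl | hzi
      exacts [absurd hzr hr1, hzi]
  · rintro (⟨hs, r, hr, hlow⟩ | ⟨hs, r, hr, hlow⟩)
    · exact ⟨⟨(hc.not_mem_psiLe_pred_iff s).2 (Or.inr hs), r, hr,
        hlow.of_le i.le_succ hc.vs_mem_thetaLe⟩, hs⟩
    refine ⟨⟨(hc.not_mem_psiLe_pred_iff s).2 (Or.inr hs), r, hr, hdown.trans hlow.1,
      hc.vs_mem_thetaLe, fun z hzr hz => ?_⟩, hs⟩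
    rcases Anc.eq_or_anc_of_adj hc.isTree hc.adj hdown (hlow.2.2 z hzr (thetaLe_mono i.le_succ hz))
      with rfl | hzi
    exacts [absurd (hc.eq_of_anc hz hdown) hc.adj.ne', hzi]

theorem mem_bag_succ_of_edge (hdown : Anc S.T S.root (S.vs i) (S.vs (i + 1)))
    (hp : p ∈ S.B (S.vs i)) (hE : S.E p t) (ht : t ∈ S.psiGtAt (i + 1) (S.vs (i + 1))) :
    p ∈ S.B (S.vs (i + 1)) := by
  obtain ⟨y, hpy, hty⟩ := hc.isTreeDecomp.2.1 p t hE
  exact Anc.mem_of_not_anc hc.isTree (hc.isTreeDecomp.2.2 p) hpy hp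
    ((hc.mem_psiGtAt_succ_iff ht.1 hty).1 ht).1 fun h => hc.adj.ne (hdown.antisymm hc.isTree h)

section Selectors

variable (hf : S.Sel Set.univ f) (hg : S.Sel Set.univ g)
  (h1 : ∀ x ∈ S.theta (i + 1), S.ViewEq f g (i + 1) x)
include hf hg h1

theorem viewIn_diff_psiLe_eq :
    ∀ s ∈ S.B (S.vs i), S.ViewIn (S.psiGtAt i (S.vs i) \ S.psiLe i) f s =
      S.ViewIn (S.psiGtAt i (S.vs i) \ S.psiLe i) g s := by
  intro s hs
  rcases Anc.of_adj hc.isTree hc.adj with hdown | hup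
  · rw [hc.diff_psiLe_eq_union hdown]
    have hsi := hc.mem_psiLe_of_mem_bag hs
    have hcl : ∀ (f' : V → Option V), S.Sel Set.univ f' → ∀ x, ∀ u ∈ S.psiGtAt (i + 1) x,
        ∀ t ∈ S.psiGtAt (i + 1) (S.vs i) ∪ S.psiGtAt (i + 1) (S.vs (i + 1)),
        f' u = some t → t ∈ S.psiGtAt (i + 1) x := fun _ hf' _ _ hu t ht hut =>
      hc.mem_psiGtAt_succ_of_edge hu (hf' _ t hut).2 (ht.elim (·.1) (·.1))
    refine viewIn_union_eq (fun h => h.elim (·.1 hsi) (·.1 hsi)) (hcl f hf _) (hcl g hg _)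
      (hcl f hf _) (hcl g hg _) (fun _ _ _ => (h1 _ hdown).viewIn_eq hs) fun t ht hst => ?_
    have hE : S.E s t := hst.elim (fun h => (hf s t h).2) fun h => (hg s t h).2
    exact (h1 _ (Anc.refl _ _ _)).viewIn_eq (hc.mem_bag_succ_of_edge hdown hs hE ht)
  · rw [hc.diff_psiLe_eq_empty hup]
    have hunk : ∀ f : V → Option V, S.ViewIn ∅ f s .unk :=
      fun _ => (viewIn_unk_iff (Set.notMem_empty s)).2 fun t _ => Set.notMem_empty t
    exact viewIn_eq_of_viewIn (hunk f) (hunk g)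

theorem viewIn_psiGtAt_self_eq (h2 : ∀ s ∈ S.B (S.vs i), (f θ = some s ↔ g θ = some s))
    (h3 : ∀ t ∈ S.B (S.vs i), (f t = some θ ↔ g t = some θ)) :
    ∀ s ∈ S.B (S.vs i), S.ViewIn (S.psiGtAt i (S.vs i)) f s =
      S.ViewIn (S.psiGtAt i (S.vs i)) g s := by
  rw [← hc.insert_diff_psiLe]
  exact viewIn_insert_eq (fun h => h.2 hc.mem_psiLe) hc.mem_bag
    (fun t ht => hc.edge_theta (hf θ t ht).2) (fun t ht => hc.edge_theta (hg θ t ht).2) h2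
    (hc.viewIn_diff_psiLe_eq hf hg h1) (fun s hs h => h.2 (hc.mem_psiLe_of_mem_bag hs)) h3

end Selectors

end CriticalStep

end Setting

theorem selView_critical_determination_general {V : Type u} {𝒱 : Type v}
    [DecidableEq V]
    (S : Setting V 𝒱) (hS : S.Standing)
    (i : ℕ) (hi1 : 1 ≤ i) (hi2 : i ≤ S.len - 1)
    (θ : V) (hθ1 : (S.psiLe (i - 1))ᶜ = insert θ ((S.psiLe i)ᶜ)) (hθ2 : θ ∈ S.psiLe i)
    (f g : V → Option V) (hf : S.Sel Set.univ f) (hg : S.Sel Set.univ g)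
    (h1 : ∀ x ∈ S.theta (i + 1), S.ViewEq f g (i + 1) x)
    (h2 : ∀ s ∈ S.B (S.vs i), (f θ = some s ↔ g θ = some s))
    (h3 : ∀ t ∈ S.B (S.vs i), (f t = some θ ↔ g t = some θ)) :
    ∀ x ∈ S.theta i, S.ViewEq f g i x := by
  have hc := hS.criticalStep hi1 hi2 hθ1 hθ2
  intro x hx s hs w
  rw [S.selView_eq_viewIn, S.selView_eq_viewIn]
  by_cases hxi : x = S.vs i
  · subst hxi
    rw [hc.viewIn_psiGtAt_self_eq hf hg h1 h2 h3 s hs]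
  · rw [← hc.psiGtAt_succ hx hxi, (h1 x (hc.mem_theta_succ hx hxi)).viewIn_eq hs]

/-- For a critical index `i ≤ ℓ - 1` with new vertex `θ`, the
selector views at index `i` are determined by the selector views at index `i + 1`
together with the sets `{s ∈ B (vs i) | f θ = s}` and `{t ∈ B (vs i) | f t = θ}`. -/
theorem selView_critical_determination {V : Type u} {𝒱 : Type v}
    [Fintype V] [DecidableEq V] [Fintype 𝒱]
    (S : Setting V 𝒱) (hS : S.Standing) (hV : 2 ≤ Fintype.card V)
    (i : ℕ) (hi1 : 1 ≤ i) (hi2 : i ≤ S.len - 1) (hcrit : S.Crit i)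
    (θ : V) (hθ1 : (S.psiLe (i - 1))ᶜ = insert θ ((S.psiLe i)ᶜ)) (hθ2 : θ ∈ S.psiLe i)
    (f g : V → Option V) (hf : S.Sel Set.univ f) (hg : S.Sel Set.univ g)
    (h1 : ∀ x ∈ S.theta (i + 1), S.ViewEq f g (i + 1) x)
    (h2 : ∀ s ∈ S.B (S.vs i), (f θ = some s ↔ g θ = some s))
    (h3 : ∀ t ∈ S.B (S.vs i), (f t = some θ ↔ g t = some θ)) :
    ∀ x ∈ S.theta i, S.ViewEq f g i x :=
  selView_critical_determination_general S hS i hi1 hi2 θ hθ1 hθ2 f g hf hg h1 h2 h3
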